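/- arXiv:2205.08537 — 4 statements merged into one kernel-verified Lean document; each statement's English description precedes it below -/
import Mathlib

section
/- Let P be a monic polynomial with integer coefficients such that every root of P in ℂ (viewing P over ℂ via the canonical ring homomorphism ℤ → ℂ) is a root of unity. Then the multiset of complex roots of P (counted with multiplicity) is invariant under the map z ↦ z⁻¹; that is, the image of the root multiset under inversion equals the root multiset itself. -/
/-!
A root of unity has modulus one, so its inverse is its complex conjugate; and since `P` has
real coefficients, conjugation permutes its complex roots with multiplicities.
-/

open Polynomial ComplexConjugate

theorem Polynomial.Splits.roots_map_eq_of_map_eq {K : Type*} [Field K] {Q : K[X]}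
    (hQ : Q.Splits) (σ : K →+* K) (hσ : Q.map σ = Q) : Q.roots.map σ = Q.roots := by
  conv_rhs => rw [← hσ, hQ.roots_map σ]

theorem Polynomial.map_map_intCastRingHom {R : Type*} [Ring R] (σ : R →+* R) (P : ℤ[X]) :
    (P.map (Int.castRingHom R)).map σ = P.map (Int.castRingHom R) := by
  rw [map_map, RingHom.ext_int (σ.comp _) (Int.castRingHom R)]

theorem Complex.inv_eq_conj_of_pow_eq_one {z : ℂ} {k : ℕ} (hk : k ≠ 0) (hz : z ^ k = 1) :
    z⁻¹ = conj z :=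
  Complex.inv_eq_conj (Complex.norm_eq_one_of_pow_eq_one hz hk)

theorem roots_map_inv_eq_roots_general (P : Polynomial ℤ)
    (hru : ∀ z : ℂ, (P.map (Int.castRingHom ℂ)).IsRoot z → ∃ k : ℕ, 0 < k ∧ z ^ k = 1) :
    Multiset.map (fun z : ℂ => z⁻¹) (P.map (Int.castRingHom ℂ)).roots
      = (P.map (Int.castRingHom ℂ)).roots := by
  set Q := P.map (Int.castRingHom ℂ)
  calc Q.roots.map (fun z : ℂ => z⁻¹) = Q.roots.map conj :=
        Multiset.map_congr rfl fun z hz => by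
          obtain ⟨k, hk, hzk⟩ := hru z (isRoot_of_mem_roots hz)
          exact Complex.inv_eq_conj_of_pow_eq_one hk.ne' hzk
    _ = Q.roots :=
        (IsAlgClosed.splits Q).roots_map_eq_of_map_eq _ (map_map_intCastRingHom _ P)

/-- If `P` is a monic integer polynomial all of whose complex roots are roots of unity,
then the multiset of complex roots of `P` (with multiplicity) is invariant under
inversion `z ↦ z⁻¹`. -/
theorem roots_map_inv_eq_roots (P : Polynomial ℤ) (hP : P.Monic)
    (hru : ∀ z : ℂ, (P.map (Int.castRingHom ℂ)).IsRoot z → ∃ k : ℕ, 0 < k ∧ z ^ k = 1) :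
    Multiset.map (fun z : ℂ => z⁻¹) (P.map (Int.castRingHom ℂ)).roots
      = (P.map (Int.castRingHom ℂ)).roots :=
  roots_map_inv_eq_roots_general P hru
end

section
/- Let p be a prime, m a natural number, n ≥ 1, and let A be an n×n integer matrix that is invertible over ℤ (det A = ±1) and quasi-unipotent. Set Q := (A⁻¹)^(p^m). Then the characteristic polynomial of Q is congruent modulo p to the characteristic polynomial of A; that is, their images under the coefficientwise reduction map ℤ[X] → (ℤ/pℤ)[X] are equal. In particular, trace(Q) ≡ trace(A) (mod p). -/
/-!
The complex roots of the characteristic polynomial `f` of a quasi-unipotent matrix lie on the unit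
circle, so inverting them is complex conjugation, which permutes them because `f` has integer
coefficients. Hence `f` is self-reciprocal, and since the characteristic polynomial of `A⁻¹` is the
reversal of `f` up to a unit, `A⁻¹` and `A` have the same characteristic polynomial. Modulo `p`,
raising a matrix to the `p`-th power does not change its characteristic polynomial (Frobenius), and
the trace is read off from the characteristic polynomial.
-/

/-- A square integer matrix is *quasi-unipotent* if every complex root of its
characteristic polynomial is a root of unity. -/
def Matrix.QuasiUnipotent {n : ℕ} (A : Matrix (Fin n) (Fin n) ℤ) : Prop :=
  ∀ z : ℂ, (A.charpoly.map (Int.castRingHom ℂ)).IsRoot z → ∃ k : ℕ, 0 < k ∧ z ^ k = 1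

open Polynomial

namespace Polynomial

variable {K : Type*} [Field K]

lemma reverse_X_sub_C {a : K} (ha : a ≠ 0) : (X - C a).reverse = C (-a) * (X - C a⁻¹) := by
  have hrev : (X - C a).reverse = 1 - C a * X := by simp [reverse, reflect_sub]
  rw [hrev, mul_sub, ← C_mul, neg_mul, mul_inv_cancel₀ ha, C_neg, C_neg, C_1]
  ring

lemma reverse_multiset_prod_X_sub_C (s : Multiset K) (hs : 0 ∉ s) :
    (s.map (X - C ·)).prod.reverse =
      C (s.map (0 - ·)).prod * (s.map fun a => X - C a⁻¹).prod := by
  induction s using Multiset.induction_on with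
  | empty => simpa using reverse_C (1 : K)
  | cons a s ih =>
    rw [Multiset.mem_cons, not_or] at hs
    simp only [Multiset.map_cons, Multiset.prod_cons, reverse_mul_of_domain, C_mul, zero_sub,
      reverse_X_sub_C (Ne.symm hs.1), ih hs.2]
    ring

lemma Monic.reverse_eq_C_coeff_zero_mul {f : K[X]} (hf : f.Monic) (hs : f.Splits)
    (h0 : 0 ∉ f.roots) (hinv : f.roots.map (·⁻¹) = f.roots) :
    f.reverse = C (f.coeff 0) * f := by
  have hprod := hs.eq_prod_roots_of_monic hf
  have hrev := reverse_multiset_prod_X_sub_C f.roots h0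
  rw [← hprod, ← hs.eval_eq_prod_roots_of_monic hf, ← coeff_zero_eq_eval_zero] at hrev
  rw [hrev]
  congr 1
  conv_rhs => rw [hprod, ← hinv, Multiset.map_map]
  rfl

lemma reverse_map_of_injective {R S : Type*} [Semiring R] [Semiring S] {i : R →+* S}
    (hi : Function.Injective i) (f : R[X]) : (f.map i).reverse = f.reverse.map i := by
  rw [reverse, reverse, natDegree_map_eq_of_injective hi, reflect_map]

lemma Monic.reverse_eq_C_coeff_zero_mul_of_roots_of_unity {f : ℤ[X]} (hf : f.Monic)
    (hroots : ∀ z : ℂ, (f.map (Int.castRingHom ℂ)).IsRoot z → ∃ k : ℕ, 0 < k ∧ z ^ k = 1) :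
    f.reverse = C (f.coeff 0) * f := by
  set φ := Int.castRingHom ℂ
  set g := f.map φ
  have hs : g.Splits := IsAlgClosed.splits g
  have hnorm : ∀ z ∈ g.roots, ‖z‖ = 1 := fun z hz ↦ by
    obtain ⟨k, hk, hzk⟩ := hroots z (isRoot_of_mem_roots hz)
    exact Complex.norm_eq_one_of_pow_eq_one hzk hk.ne'
  have h0 : (0 : ℂ) ∉ g.roots := fun h ↦ by simpa using hnorm 0 h
  have hconj : g.roots.map (starRingEnd ℂ) = g.roots := by
    have hg : g.map (starRingEnd ℂ) = g := by
      rw [map_map]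
      exact congrArg f.map (RingHom.ext_int _ _)
    rw [← hs.roots_map, hg]
  have hinv : g.roots.map (·⁻¹) = g.roots :=
    (Multiset.map_congr rfl fun z hz ↦ Complex.inv_eq_conj (hnorm z hz)).trans hconj
  have hrev := (hf.map φ).reverse_eq_C_coeff_zero_mul hs h0 hinv
  apply map_injective φ (RingHom.injective_int φ)
  rw [← reverse_map_of_injective (RingHom.injective_int φ), hrev, Polynomial.map_mul, map_C,
    coeff_map]

end Polynomial

namespace Matrix

variable {n : Type*} [Fintype n] [DecidableEq n]

lemma charpoly_inv_of_reverse_charpoly {R : Type*} [CommRing R] (A : Matrix n n R)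
    (hA : IsUnit A.det) (h : A.charpoly.reverse = C (A.charpoly.coeff 0) * A.charpoly) :
    A⁻¹.charpoly = A.charpoly := by
  have hunit : (-1) ^ Fintype.card n * Ring.inverse A.det * A.charpoly.coeff 0 = 1 := by
    linear_combination
      Ring.inverse_mul_cancel _ hA - Ring.inverse A.det * det_eq_sign_charpoly_coeff A
  rw [charpoly_inv A ((isUnit_iff_isUnit_det A).mpr hA), ← reverse_charpoly, h]
  calc _ = C ((-1) ^ Fintype.card n * Ring.inverse A.det * A.charpoly.coeff 0) * A.charpoly := by
        simp only [map_mul, map_pow, map_neg, map_one]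
        ring
    _ = A.charpoly := by rw [hunit, C_1, one_mul]

lemma charpoly_inv_of_quasiUnipotent {k : ℕ} (A : Matrix (Fin k) (Fin k) ℤ) (hA : IsUnit A.det)
    (hqu : A.QuasiUnipotent) : A⁻¹.charpoly = A.charpoly :=
  A.charpoly_inv_of_reverse_charpoly hA
    ((charpoly_monic A).reverse_eq_C_coeff_zero_mul_of_roots_of_unity hqu)

lemma trace_eq_of_charpoly_eq {R : Type*} [CommRing R] {M N : Matrix n n R}
    (h : M.charpoly = N.charpoly) : M.trace = N.trace := by
  rw [trace_eq_neg_charpoly_nextCoeff, h, trace_eq_neg_charpoly_nextCoeff]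

end Matrix

lemma FiniteField.Matrix.charpoly_pow_card_pow {n : Type*} [Fintype n] [DecidableEq n]
    {K : Type*} [Field K] [Fintype K] (M : Matrix n n K) (m : ℕ) :
    (M ^ Fintype.card K ^ m).charpoly = M.charpoly := by
  induction m with
  | zero => simp
  | succ m ih => rw [pow_succ, pow_mul, FiniteField.Matrix.charpoly_pow_card, ih]

theorem charpoly_inv_pow_prime_pow_congr_general {p : ℕ} (hp : p.Prime) (m : ℕ) {n : ℕ}
    (A : Matrix (Fin n) (Fin n) ℤ) (hdet : A.det = 1 ∨ A.det = -1)
    (hqu : A.QuasiUnipotent) (Q : Matrix (Fin n) (Fin n) ℤ) (hQ : Q = (A⁻¹) ^ p ^ m) :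
    Q.charpoly.map (Int.castRingHom (ZMod p)) = A.charpoly.map (Int.castRingHom (ZMod p)) ∧
      (Q.trace : ZMod p) = (A.trace : ZMod p) := by
  have : Fact p.Prime := ⟨hp⟩
  have hinv := A.charpoly_inv_of_quasiUnipotent (Int.isUnit_iff.mpr hdet) hqu
  have hchar : Q.charpoly.map (Int.castRingHom (ZMod p)) =
      A.charpoly.map (Int.castRingHom (ZMod p)) := by
    have hpow := FiniteField.Matrix.charpoly_pow_card_pow (A⁻¹.map (Int.castRingHom (ZMod p))) m
    rw [ZMod.card, ← RingHom.mapMatrix_apply, ← map_pow, ← hQ, RingHom.mapMatrix_apply] at hpow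
    rw [← Matrix.charpoly_map, hpow, RingHom.mapMatrix_apply, Matrix.charpoly_map, hinv]
  refine ⟨hchar, ?_⟩
  rw [← Matrix.charpoly_map, ← Matrix.charpoly_map] at hchar
  simpa only [← AddMonoidHom.map_trace, eq_intCast] using Matrix.trace_eq_of_charpoly_eq hchar

/-- Let `p` be a prime, `m` a natural number, and `A` an `n × n` integer matrix (`n ≥ 1`)
invertible over `ℤ` (`det A = ±1`) and quasi-unipotent.  Set `Q := (A⁻¹) ^ (p ^ m)`.
Then the characteristic polynomial of `Q` is congruent mod `p` to that of `A`
(their coefficientwise reductions in `(ℤ/pℤ)[X]` agree); in particular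
`trace Q ≡ trace A (mod p)`. -/
theorem charpoly_inv_pow_prime_pow_congr {p : ℕ} (hp : p.Prime) (m : ℕ) {n : ℕ}
    (hn : 1 ≤ n) (A : Matrix (Fin n) (Fin n) ℤ) (hdet : A.det = 1 ∨ A.det = -1)
    (hqu : A.QuasiUnipotent) (Q : Matrix (Fin n) (Fin n) ℤ) (hQ : Q = (A⁻¹) ^ p ^ m) :
    Q.charpoly.map (Int.castRingHom (ZMod p)) = A.charpoly.map (Int.castRingHom (ZMod p)) ∧
      (Q.trace : ZMod p) = (A.trace : ZMod p) :=
  charpoly_inv_pow_prime_pow_congr_general hp m A hdet hqu Q hQ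
end

section
/- Let n ≥ 1 and let Q be an n×n integer matrix that is quasi-unipotent. Let e denote the algebraic multiplicity of 1 as an eigenvalue of Q, i.e., the multiplicity of 1 as a root of the characteristic polynomial of Q viewed over ℂ. Then 2·e ≤ n + trace(Q). -/
/-!
The `n` complex roots of the characteristic polynomial are roots of unity, so each has real
part `≥ -1`. Since `trace Q` is their sum and `e` of them equal `1`, `trace Q ≥ e - (n - e)`.
-/

open Polynomial

theorem Complex.neg_one_le_re_of_pow_eq_one {z : ℂ} {k : ℕ} (hk : k ≠ 0) (h : z ^ k = 1) :
    -1 ≤ z.re := by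
  have hz : ‖z‖ = 1 := Complex.norm_eq_one_of_pow_eq_one h hk
  linarith [neg_abs_le z.re, Complex.abs_re_le_norm z]

/-- Each `1` adds `2` to both sides, and any other `z` adds `1 + z.re ≥ 0` to the right. -/
theorem Multiset.two_mul_count_one_le_card_add_re_sum (s : Multiset ℂ)
    (hs : ∀ z ∈ s, -1 ≤ z.re) : 2 * (s.count 1 : ℝ) ≤ Multiset.card s + s.sum.re := by
  induction s using Multiset.induction_on with
  | empty => simp
  | cons a s ih =>
    have ha := hs a (Multiset.mem_cons_self a s)
    have ih := ih fun z hz ↦ hs z (Multiset.mem_cons_of_mem hz)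
    rcases eq_or_ne a 1 with rfl | ha1
    · simp only [Multiset.count_cons_self, Multiset.card_cons, Multiset.sum_cons,
        Complex.add_re, Complex.one_re]
      push_cast
      linarith
    · simp only [Multiset.count_cons_of_ne ha1.symm, Multiset.card_cons, Multiset.sum_cons,
        Complex.add_re]
      push_cast
      linarith

theorem Matrix.card_roots_charpoly {ι K : Type*} [Fintype ι] [DecidableEq ι] [Field K]
    [IsAlgClosed K] (A : Matrix ι ι K) : A.charpoly.roots.card = Fintype.card ι := by
  rw [IsAlgClosed.card_roots_eq_natDegree, Matrix.charpoly_natDegree_eq_dim]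

theorem two_mul_multiplicity_one_le_general {n : ℕ}
    (Q : Matrix (Fin n) (Fin n) ℤ) (hqu : Q.QuasiUnipotent)
    (e : ℕ) (he : e = (Q.charpoly.map (Int.castRingHom ℂ)).rootMultiplicity 1) :
    2 * (e : ℤ) ≤ (n : ℤ) + Q.trace := by
  have hre : ∀ z ∈ (Q.charpoly.map (Int.castRingHom ℂ)).roots, -1 ≤ z.re := fun z hz ↦
    have ⟨k, hk, hzk⟩ := hqu z (isRoot_of_mem_roots hz)
    Complex.neg_one_le_re_of_pow_eq_one hk.ne' hzk
  have key := Multiset.two_mul_count_one_le_card_add_re_sum _ hre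
  rw [count_roots, ← he, ← Matrix.charpoly_map, Matrix.card_roots_charpoly,
    ← Matrix.trace_eq_sum_roots_charpoly, ← AddMonoidHom.map_trace,
    Fintype.card_fin, eq_intCast, Complex.intCast_re] at key
  exact_mod_cast key

/-- If `Q` is an `n × n` quasi-unipotent integer matrix (`n ≥ 1`) and `e` is the algebraic
multiplicity of `1` as an eigenvalue of `Q` (the multiplicity of `1` as a root of the
characteristic polynomial of `Q` over `ℂ`), then `2 e ≤ n + trace Q`. -/
theorem two_mul_multiplicity_one_le {n : ℕ} (hn : 1 ≤ n)
    (Q : Matrix (Fin n) (Fin n) ℤ) (hqu : Q.QuasiUnipotent)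
    (e : ℕ) (he : e = (Q.charpoly.map (Int.castRingHom ℂ)).rootMultiplicity 1) :
    2 * (e : ℤ) ≤ (n : ℤ) + Q.trace :=
  two_mul_multiplicity_one_le_general Q hqu e he
end

section
/- Let Q be a 3×3 integer matrix that is quasi-unipotent and has trace(Q) = −1. Then the algebraic multiplicity of 1 as an eigenvalue of Q (the multiplicity of 1 as a root of the characteristic polynomial of Q viewed over ℂ) is at most 1. -/
open Polynomial

namespace Multiset

theorem sum_sub_nsmul_mem_of_replicate_le {M : Type*} [AddCommGroup M] {s : Multiset M}
    {a : M} {m : ℕ} (hle : replicate m a ≤ s) (hcard : card s = m + 1) :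
    s.sum - m • a ∈ s := by
  obtain ⟨t, rfl⟩ := le_iff_exists_add.mp hle
  obtain ⟨b, rfl⟩ : ∃ b, t = {b} :=
    card_eq_one.mp (by simpa [card_add, card_replicate] using hcard)
  simp

end Multiset

namespace Matrix

variable {n R K : Type*} [Fintype n] [DecidableEq n] [CommRing R] [Field K] [IsAlgClosed K]

theorem card_roots_charpoly_map [Nontrivial R] (A : Matrix n n R) (f : R →+* K) :
    Multiset.card (A.charpoly.map f).roots = Fintype.card n := by
  rw [IsAlgClosed.card_roots_eq_natDegree, A.charpoly_monic.natDegree_map,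
    A.charpoly_natDegree_eq_dim]

theorem sum_roots_charpoly_map (A : Matrix n n R) (f : R →+* K) :
    (A.charpoly.map f).roots.sum = f A.trace := by
  rw [← charpoly_map, ← trace_eq_sum_roots_charpoly, AddMonoidHom.map_trace]

theorem QuasiUnipotent.norm_eq_one {m : ℕ} {A : Matrix (Fin m) (Fin m) ℤ}
    (hA : A.QuasiUnipotent) {z : ℂ} (hz : z ∈ (A.charpoly.map (Int.castRingHom ℂ)).roots) :
    ‖z‖ = 1 := by
  obtain ⟨k, hk, hzk⟩ := hA z (isRoot_of_mem_roots hz)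
  exact Complex.norm_eq_one_of_pow_eq_one hzk hk.ne'

end Matrix

/-- If `Q` is a `3 × 3` quasi-unipotent integer matrix with trace `-1`, then the algebraic
multiplicity of `1` as an eigenvalue of `Q` (the multiplicity of `1` as a root of the
characteristic polynomial of `Q` over `ℂ`) is at most `1`. -/
theorem multiplicity_one_le_one_of_trace_neg_one (Q : Matrix (Fin 3) (Fin 3) ℤ)
    (hqu : Q.QuasiUnipotent) (htr : Q.trace = -1) :
    (Q.charpoly.map (Int.castRingHom ℂ)).rootMultiplicity 1 ≤ 1 := by
  by_contra! hmult
  set roots := (Q.charpoly.map (Int.castRingHom ℂ)).roots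
  have hle : Multiset.replicate 2 (1 : ℂ) ≤ roots :=
    Multiset.le_count_iff_replicate_le.mp (by rw [count_roots]; omega)
  have hthird := Multiset.sum_sub_nsmul_mem_of_replicate_le hle
    (by rw [Matrix.card_roots_charpoly_map, Fintype.card_fin])
  rw [Matrix.sum_roots_charpoly_map, htr] at hthird
  have hnorm := hqu.norm_eq_one hthird
  norm_num at hnorm
end
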